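/- Let n ≥ 2 and consider the blossomed n-cycle with its cyclic ample framing. For a,b,c,d ∈ {1,…,n} with a ≠ b and c ≠ d, the good routes ρ_{(a,b)} and ρ_{(c,d)} are compatible if and only if one of the following holds: (i) the cyclic intervals [a,b] and [c,d] are disjoint, where [x,y] = {x, x+1, …, y} with indices taken mod n; (ii) c and d both lie in [a,b] and, listing [a,b] in the cyclic order a, a+1, …, b, one encounters a, then c, then d, then b (weak inequalities allowed, i.e., a ⪯ c ⪯ d ⪯ b in that cyclic order); or (iii) a and b both lie in [c,d] and c ⪯ a ⪯ b ⪯ d in the cyclic order starting at c. -/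

import Mathlib

namespace PaperDKK

/-- Edge colours for framings. -/
inductive Col : Type
  | red : Col
  | blue : Col
  deriving DecidableEq

variable {V E : Type*}

/-- The list of vertices visited by a walk. -/
def walkVerts (tl hd : E → V) : List E → List V
  | [] => []
  | e :: es => tl e :: (e :: es).map hd

/-- A walk: a nonempty list of consecutively composable edges. -/
def IsWalk (tl hd : E → V) (w : List E) : Prop :=
  w ≠ [] ∧ List.Chain' (fun e f => hd e = tl f) w

/-- A source: a vertex that is the head of no edge. -/
def IsSource (tl hd : E → V) (v : V) : Prop := ∀ e : E, hd e ≠ v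

/-- A sink: a vertex that is the tail of no edge. -/
def IsSink (tl hd : E → V) (v : V) : Prop := ∀ e : E, tl e ≠ v

/-- An internal vertex: neither a source nor a sink. -/
def IsInternal (tl hd : E → V) (v : V) : Prop :=
  ¬ IsSource tl hd v ∧ ¬ IsSink tl hd v

/-- A minimal directed cycle: a closed walk visiting no vertex twice. -/
def IsMinCycle (tl hd : E → V) (w : List E) : Prop :=
  IsWalk tl hd w ∧
  (∀ e ∈ w.getLast?, ∀ f ∈ w.head?, hd e = tl f) ∧
  (w.map hd).Nodup

/-- A walk from a source to a sink. -/
def IsSrcSnkWalk (tl hd : E → V) (w : List E) : Prop :=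
  IsWalk tl hd w ∧
  (∀ e ∈ w.head?, IsSource tl hd (tl e)) ∧
  (∀ e ∈ w.getLast?, IsSink tl hd (hd e))

/-- A route: a minimal directed cycle or a source-to-sink walk. -/
def IsRoute (tl hd : E → V) (w : List E) : Prop :=
  IsMinCycle tl hd w ∨ IsSrcSnkWalk tl hd w

/-- A good route: a source-to-sink walk none of whose contiguous subwalks is a
minimal directed cycle. -/
def IsGoodRoute (tl hd : E → V) (w : List E) : Prop :=
  IsSrcSnkWalk tl hd w ∧ ∀ u : List E, u <:+: w → ¬ IsMinCycle tl hd u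

/-- A monochromatic list of edges. -/
def Mono (col : E → Col) (w : List E) : Prop :=
  ∃ b : Col, ∀ e ∈ w, col e = b

/-- Cyclic ample framing: at every internal vertex there is exactly one red and
one blue incoming edge and exactly one red and one blue outgoing edge, and every
minimal directed cycle is monochromatic. -/
def CyclicAmpleFraming (tl hd : E → V) (col : E → Col) : Prop :=
  (∀ v : V, IsInternal tl hd v →
    (∃! e : E, hd e = v ∧ col e = Col.red) ∧
    (∃! e : E, hd e = v ∧ col e = Col.blue) ∧
    (∃! e : E, tl e = v ∧ col e = Col.red) ∧
    (∃! e : E, tl e = v ∧ col e = Col.blue)) ∧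
  (∀ w : List E, IsMinCycle tl hd w → Mono col w)

/-- Incompatibility of two source-to-sink walks: they admit decompositions
`P·S·Q` and `P′·S·Q′` along a common (possibly vertex-only) subwalk `S`, with
the last edge of `P` and the first edge of `Q′` blue while the first edge of
`Q` and the last edge of `P′` are red.  Here the `P`-part is `P ++ [p]` and the
`Q`-part is `q :: Q`, so `p` is the last edge of the `P`-part and `q` the first
edge of the `Q`-part. -/
def Incompat (tl hd : E → V) (col : E → Col) (w w' : List E) : Prop :=
  IsSrcSnkWalk tl hd w ∧ IsSrcSnkWalk tl hd w' ∧
  ∃ (P S Q P' Q' : List E) (p q p' q' : E),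
    ((w = P ++ p :: (S ++ q :: Q) ∧ w' = P' ++ p' :: (S ++ q' :: Q')) ∨
     (w' = P ++ p :: (S ++ q :: Q) ∧ w = P' ++ p' :: (S ++ q' :: Q'))) ∧
    hd p = hd p' ∧
    col p = Col.blue ∧ col q' = Col.blue ∧ col q = Col.red ∧ col p' = Col.red

/-- A route is exceptional if it is compatible with every route. -/
def Exceptional (tl hd : E → V) (col : E → Col) (w : List E) : Prop :=
  IsRoute tl hd w ∧ ∀ w' : List E, IsRoute tl hd w' → ¬ Incompat tl hd col w w'

/-- Connectivity of the underlying undirected graph. -/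
def Connected (tl hd : E → V) : Prop :=
  ∀ v w : V,
    Relation.ReflTransGen
      (fun x y => ∃ e : E, (tl e = x ∧ hd e = y) ∨ (tl e = y ∧ hd e = x)) v w

/-- Every source and every sink has degree one. -/
def DegreeOneEnds (tl hd : E → V) : Prop :=
  (∀ v : V, IsSource tl hd v → ∃! e : E, tl e = v) ∧
  (∀ v : V, IsSink tl hd v → ∃! e : E, hd e = v)

/-- No idle edges: no edge between internal vertices is the unique outgoing edge
of its tail or the unique incoming edge of its head. -/
def NoIdleEdges (tl hd : E → V) : Prop :=
  ∀ e : E, IsInternal tl hd (tl e) → IsInternal tl hd (hd e) →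
    (∃ f : E, f ≠ e ∧ tl f = tl e) ∧ (∃ f : E, f ≠ e ∧ hd f = hd e)

/-- Vertices of the blossomed `n`-cycle: cycle vertices `v_i`, sources `s_i`,
sinks `t_i`. -/
abbrev CVtx (n : ℕ) : Type := Fin n ⊕ Fin n ⊕ Fin n

/-- Edges of the blossomed `n`-cycle: cycle edges `v_i → v_{i+1}`, source edges
`s_i → v_i`, sink edges `v_i → t_i`. -/
abbrev CEdg (n : ℕ) : Type := Fin n ⊕ Fin n ⊕ Fin n

/-- Successor mod `n`. -/
def cycNext {n : ℕ} (i : Fin n) : Fin n :=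
  ⟨(i.1 + 1) % n, Nat.mod_lt _ (Nat.lt_of_le_of_lt (Nat.zero_le _) i.isLt)⟩

def Ctl (n : ℕ) : CEdg n → CVtx n
  | Sum.inl i => Sum.inl i
  | Sum.inr (Sum.inl i) => Sum.inr (Sum.inl i)
  | Sum.inr (Sum.inr i) => Sum.inl i

def Chd (n : ℕ) : CEdg n → CVtx n
  | Sum.inl i => Sum.inl (cycNext i)
  | Sum.inr (Sum.inl i) => Sum.inl i
  | Sum.inr (Sum.inr i) => Sum.inr (Sum.inr i)

/-- The cyclic ample framing of the blossomed `n`-cycle: the cycle edges are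
red, all other edges are blue. -/
def Ccol (n : ℕ) : CEdg n → Col
  | Sum.inl _ => Col.red
  | Sum.inr _ => Col.blue

/-- The cyclic position of `x` measured from `a` (number of steps from `a`
to `x` around the cycle). -/
def cpos {n : ℕ} (a x : Fin n) : ℕ := (x.1 + n - a.1) % n

/-- `x` lies in the cyclic interval `[a,b] = {a, a+1, …, b}` (indices mod `n`). -/
def memCyc {n : ℕ} (a b x : Fin n) : Prop := cpos a x ≤ cpos a b

/-- The cycle edges from `a` to `b` (first occurrence), i.e.
`c_a, c_{a+1}, …, c_{b-1}` (indices mod `n`). -/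
def seg {n : ℕ} (a b : Fin n) : List (Fin n) :=
  (List.range (cpos a b)).map
    (fun k => ⟨(a.1 + k) % n, Nat.mod_lt _ (Nat.lt_of_le_of_lt (Nat.zero_le _) a.isLt)⟩)

/-- The good route `ρ_{(a,b)}` : `s_a → v_a → v_{a+1} → ⋯ → v_b → t_b`, entering
the cycle at `v_a`, following it to the first occurrence of `v_b`, and exiting. -/
def rho {n : ℕ} (a b : Fin n) : List (CEdg n) :=
  Sum.inr (Sum.inl a) :: ((seg a b).map Sum.inl ++ [Sum.inr (Sum.inr b)])

section Arith
variable {n : ℕ}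

lemma npos (a : Fin n) : 0 < n := Nat.lt_of_le_of_lt (Nat.zero_le _) a.isLt

lemma cpos_lt (a b : Fin n) : cpos a b < n := Nat.mod_lt _ (npos a)

lemma cpos_self (a : Fin n) : cpos a a = 0 := by
  unfold cpos
  have : a.1 + n - a.1 = n := by omega
  rw [this, Nat.mod_self]

lemma cpos_eq (a x : Fin n) :
    cpos a x = if a.1 ≤ x.1 then x.1 - a.1 else x.1 + n - a.1 := by
  have hx := x.isLt; have ha := a.isLt
  unfold cpos
  split_ifs with h
  · have : x.1 + n - a.1 = (x.1 - a.1) + n := by omega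
    rw [this, Nat.add_mod_right, Nat.mod_eq_of_lt (by omega)]
  · rw [Nat.mod_eq_of_lt (by omega)]

lemma cpos_add (a b : Fin n) : (a.1 + cpos a b) % n = b.1 := by
  unfold cpos
  rw [Nat.add_mod_mod]
  have : a.1 + (b.1 + n - a.1) = b.1 + n := by omega
  rw [this, Nat.add_mod_right, Nat.mod_eq_of_lt b.isLt]

lemma cpos_val_add (a : Fin n) (k : ℕ) (hk : k < n) (h : 0 < n) :
    cpos a ⟨(a.1 + k) % n, Nat.mod_lt _ h⟩ = k := by
  have ha := a.isLt
  unfold cpos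
  rcases Nat.lt_or_ge (a.1 + k) n with h1 | h1
  · simp only [Nat.mod_eq_of_lt h1]
    have : a.1 + k + n - a.1 = k + n := by omega
    rw [this, Nat.add_mod_right, Nat.mod_eq_of_lt hk]
  · have h2 : (a.1 + k) % n = a.1 + k - n := by
      rw [Nat.mod_eq_sub_mod h1, Nat.mod_eq_of_lt (by omega)]
    simp only [h2]
    have : a.1 + k - n + n - a.1 = k := by omega
    rw [this, Nat.mod_eq_of_lt hk]

lemma fin_eq_add (a b : Fin n) : b = ⟨(a.1 + cpos a b) % n, Nat.mod_lt _ (npos a)⟩ :=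
  Fin.ext (cpos_add a b).symm

lemma cpos_ne_zero (a b : Fin n) (h : cpos a b ≠ 0) : a ≠ b := by
  intro h'; subst h'; exact h (cpos_self a)

lemma seg_length (a b : Fin n) : (seg a b).length = cpos a b := by
  simp [seg]

lemma seg_getElem (a b : Fin n) (k : ℕ) (hk : k < (seg a b).length) :
    (seg a b)[k] = ⟨(a.1 + k) % n, Nat.mod_lt _ (npos a)⟩ := by
  simp [seg]

end Arith
section Walk
variable {n : ℕ}

lemma rho_length (a b : Fin n) : (rho a b).length = cpos a b + 2 := by
  simp [rho, seg_length]

lemma chd_ne_src (a : Fin n) (e : CEdg n) : Chd n e ≠ Sum.inr (Sum.inl a) := by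
  rcases e with i | i | i <;> simp [Chd]

lemma ctl_ne_snk (b : Fin n) (e : CEdg n) : Ctl n e ≠ Sum.inr (Sum.inr b) := by
  rcases e with i | i | i <;> simp [Ctl]

lemma rho_eq_concat (a b : Fin n) :
    rho a b = (Sum.inr (Sum.inl a) :: (seg a b).map Sum.inl) ++ [Sum.inr (Sum.inr b)] := by
  simp [rho]

lemma rho_chain (a b : Fin n) :
    List.Chain' (fun e f => Chd n e = Ctl n f) (rho a b) := by
  have hm : (seg a b).length = cpos a b := seg_length a b
  unfold List.Chain'
  rw [List.isChain_iff_getElem]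
  intro i h
  rw [rho_length] at h
  try simp only [List.get_eq_getElem]
  have hmod : ∀ k : ℕ, (a.1 + k) % n % n = (a.1 + k) % n := fun k => Nat.mod_mod_of_dvd _ dvd_rfl
  rcases i with _ | i
  · -- first step
    simp only [rho, List.getElem_cons_zero, List.getElem_cons_succ]
    rcases Nat.eq_zero_or_pos (cpos a b) with h0 | h0
    · have hb : b = a := by
        have := fin_eq_add a b
        rw [h0] at this
        simp only [Nat.add_zero] at this
        rw [this]; exact Fin.ext (by simp [Nat.mod_eq_of_lt a.isLt])
      have : ((seg a b).map Sum.inl ++ [Sum.inr (Sum.inr b)] : List (CEdg n))[0]'(by simp [hm] <;> omega)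
          = Sum.inr (Sum.inr b) := by
        rw [List.getElem_append_right (by simp [hm, h0])]
        simp [hm, h0]
      rw [this]
      simp [Chd, Ctl, hb]
    · have : ((seg a b).map Sum.inl ++ [Sum.inr (Sum.inr b)] : List (CEdg n))[0]'(by simp [hm] <;> omega)
          = Sum.inl ((seg a b)[0]'(by omega)) := by
        rw [List.getElem_append_left (by simp [hm]; omega), List.getElem_map]
      rw [this, seg_getElem]
      simp only [Chd, Ctl]
      exact congrArg _ (Fin.ext (by simp [Nat.mod_eq_of_lt a.isLt]))
  · -- later steps
    have hi : i + 1 < cpos a b + 1 := by omega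
    have hi' : i < cpos a b := by omega
    simp only [rho, List.getElem_cons_succ]
    have e1 : ((seg a b).map Sum.inl ++ [Sum.inr (Sum.inr b)] : List (CEdg n))[i]'(by simp [hm]; omega)
        = Sum.inl ((seg a b)[i]'(by omega)) := by
      rw [List.getElem_append_left (by simp [hm]; omega), List.getElem_map]
    rw [e1, seg_getElem]
    rcases Nat.lt_or_ge (i+1) (cpos a b) with h2 | h2
    · have e2 : ((seg a b).map Sum.inl ++ [Sum.inr (Sum.inr b)] : List (CEdg n))[i+1]'(by simp [hm]; omega)
          = Sum.inl ((seg a b)[i+1]'(by omega)) := by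
        rw [List.getElem_append_left (by simp [hm]; omega), List.getElem_map]
      rw [e2, seg_getElem]
      simp only [Chd, Ctl, cycNext]
      exact congrArg _ (Fin.ext (by simp [Nat.mod_add_mod, Nat.add_assoc]))
    · have h3 : i + 1 = cpos a b := by omega
      have e2 : ((seg a b).map Sum.inl ++ [Sum.inr (Sum.inr b)] : List (CEdg n))[i+1]'(by simp [hm]; omega)
          = Sum.inr (Sum.inr b) := by
        rw [List.getElem_append_right (by simp [hm]; omega)]
        simp [hm, h3]
      rw [e2]
      simp only [Chd, Ctl, cycNext]
      refine congrArg _ (Fin.ext ?_)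
      show ((a.1 + i) % n + 1) % n = b.1
      rw [Nat.mod_add_mod, Nat.add_assoc, h3]
      exact cpos_add a b

lemma rho_srcsnk (a b : Fin n) :
    IsSrcSnkWalk (Ctl n) (Chd n) (rho a b) := by
  refine ⟨⟨by simp [rho], rho_chain a b⟩, ?_, ?_⟩
  · intro e he
    simp only [rho, List.head?_cons, Option.mem_def, Option.some.injEq] at he
    subst he
    intro f
    exact chd_ne_src a f
  · intro e he
    rw [rho_eq_concat, List.getLast?_concat] at he
    simp only [Option.mem_def, Option.some.injEq] at he
    subst he
    intro f
    exact ctl_ne_snk b f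

end Walk
section Split
variable {n : ℕ}

lemma mem_dropLast_mid {α : Type*} (u t : List α) (p : α) (ht : t ≠ []) :
    p ∈ (u ++ p :: t).dropLast := by
  rcases List.eq_nil_or_concat t with h | ⟨t₀, x, rfl⟩
  · exact absurd h ht
  · have h2 : u ++ p :: t₀.concat x = (u ++ p :: t₀) ++ [x] := by simp
    rw [h2, List.dropLast_concat]
    exact List.mem_append.mpr (Or.inr List.mem_cons_self)

lemma red_of_mem_map (l : List (Fin n)) (e : CEdg n) (he : e ∈ l.map Sum.inl) :
    Ccol n e = Col.red := by
  simp only [List.mem_map] at he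
  obtain ⟨i, _, rfl⟩ := he
  rfl

/-- Analysis of a blue-then-red decomposition of `rho a b`. -/
lemma splitBR (a b : Fin n) {P S Q : List (CEdg n)} {p q : CEdg n}
    (h : rho a b = P ++ p :: (S ++ q :: Q))
    (hp : Ccol n p = Col.blue) (hq : Ccol n q = Col.red) :
    p = Sum.inr (Sum.inl a) ∧ S.length < cpos a b := by
  have hm : (seg a b).length = cpos a b := seg_length a b
  rcases P with _ | ⟨e, P₂⟩
  · simp only [rho, List.nil_append, List.cons.injEq] at h
    obtain ⟨hp1, h2⟩ := h
    refine ⟨hp1.symm, ?_⟩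
    have hlen : cpos a b + 1 = S.length + (Q.length + 1) := by
      have := congrArg List.length h2
      simpa [hm] using this
    rcases Nat.lt_or_ge S.length (cpos a b) with h3 | h3
    · exact h3
    · have h4 : S.length = cpos a b := by omega
      have h5 := List.append_inj h2 (by rw [List.length_map, hm, h4])
      have h6 : q = Sum.inr (Sum.inr b) := by
        have := h5.2
        simp only [List.cons.injEq] at this
        exact this.1.symm
      rw [h6] at hq
      exact absurd hq (by simp [Ccol])
  · exfalso
    simp only [rho, List.cons_append, List.cons.injEq] at h
    obtain ⟨-, h2⟩ := h
    have hpm : p ∈ ((seg a b).map Sum.inl ++ [Sum.inr (Sum.inr b)] : List (CEdg n)).dropLast := by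
      rw [h2]
      have h3 : P₂ ++ p :: (S ++ q :: Q) = P₂ ++ p :: (S ++ q :: Q) := rfl
      exact mem_dropLast_mid P₂ (S ++ q :: Q) p (by simp)
    rw [List.dropLast_concat] at hpm
    have := red_of_mem_map _ _ hpm
    rw [hp] at this
    exact Col.noConfusion this

/-- Analysis of a red-then-blue decomposition of `rho c d`. -/
lemma splitRB (c d : Fin n) {P' S Q' : List (CEdg n)} {p' q' : CEdg n}
    (h : rho c d = P' ++ p' :: (S ++ q' :: Q'))
    (hp : Ccol n p' = Col.red) (hq : Ccol n q' = Col.blue) :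
    S.length < cpos c d ∧
    p' = Sum.inl ⟨(c.1 + (cpos c d - S.length - 1)) % n, Nat.mod_lt _ (npos c)⟩ := by
  have hm : (seg c d).length = cpos c d := seg_length c d
  rcases P' with _ | ⟨e, P₂⟩
  · exfalso
    simp only [rho, List.nil_append, List.cons.injEq] at h
    rw [← h.1] at hp
    exact Col.noConfusion hp
  · simp only [rho, List.cons_append, List.cons.injEq] at h
    obtain ⟨-, h2⟩ := h
    have hQ' : Q' = [] := by
      by_contra hne
      have hqm : q' ∈ ((seg c d).map Sum.inl ++ [Sum.inr (Sum.inr d)] : List (CEdg n)).dropLast := by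
        rw [h2]
        have h3 : P₂ ++ p' :: (S ++ q' :: Q') = (P₂ ++ p' :: S) ++ q' :: Q' := by simp
        rw [h3]
        exact mem_dropLast_mid (P₂ ++ p' :: S) Q' q' hne
      rw [List.dropLast_concat] at hqm
      have := red_of_mem_map _ _ hqm
      rw [hq] at this
      exact Col.noConfusion this
    subst hQ'
    have h3 : (seg c d).map Sum.inl ++ [Sum.inr (Sum.inr d)]
        = (P₂ ++ p' :: S) ++ [q'] := by
      rw [h2]; simp
    have h4 := List.append_inj' h3 rfl
    have h5 : (seg c d).map Sum.inl = P₂ ++ p' :: S := h4.1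
    have hlen : cpos c d = P₂.length + (S.length + 1) := by
      have := congrArg List.length h5
      simpa [hm] using this
    refine ⟨by omega, ?_⟩
    have h6 : ((seg c d).map Sum.inl)[P₂.length]'(by simp [hm]; omega) = p' := by
      rw [List.getElem_of_eq h5 (by simp [hm]; omega),
        List.getElem_append_right (le_refl P₂.length)]
      simp
    rw [List.getElem_map, seg_getElem] at h6
    rw [← h6]
    have hj : cpos c d - S.length - 1 = P₂.length := by omega
    rw [hj]

end Split
section OneSide
variable {n : ℕ}

/-- One orientation of the incompatibility existential. -/
def OneSide (a b c d : Fin n) : Prop :=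
  ∃ (P S Q P' Q' : List (CEdg n)) (p q p' q' : CEdg n),
    rho a b = P ++ p :: (S ++ q :: Q) ∧
    rho c d = P' ++ p' :: (S ++ q' :: Q') ∧
    Chd n p = Chd n p' ∧
    Ccol n p = Col.blue ∧ Ccol n q' = Col.blue ∧
    Ccol n q = Col.red ∧ Ccol n p' = Col.red

lemma cpos_zero_iff (a x : Fin n) : cpos a x = 0 ↔ x = a := by
  constructor
  · intro h
    have := fin_eq_add a x
    rw [h] at this
    rw [this]
    exact Fin.ext (by simp [Nat.mod_eq_of_lt a.isLt])
  · rintro rfl; exact cpos_self _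

lemma list_split_map (l : List (Fin n)) (k : ℕ) (hk : k < l.length) :
    l.map Sum.inl = (l.take k).map Sum.inl ++
      Sum.inl l[k] :: ((l.drop (k+1)).map (Sum.inl : Fin n → CEdg n)) := by
  have h0 : l.take k ++ l.drop k = l := List.take_append_drop k l
  have h1 : l.drop k = l[k] :: l.drop (k+1) := List.drop_eq_getElem_cons hk
  calc l.map Sum.inl = (l.take k ++ (l[k] :: l.drop (k+1))).map Sum.inl := by
        rw [← h1, h0]
    _ = _ := by simp only [List.map_append, List.map_cons]

lemma seg_shift (a c d : Fin n) (t : ℕ) (ht1 : 1 ≤ t) (ht2 : t ≤ cpos c d)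
    (ha : a.1 = (c.1 + t) % n) {b : Fin n} (hk : cpos c d - t ≤ cpos a b) :
    (seg c d).drop t = (seg a b).take (cpos c d - t) := by
  have hm := seg_length c d
  have hm2 := seg_length a b
  apply List.ext_getElem
  · simp [hm, hm2]; omega
  · intro i h1 h2
    rw [List.getElem_drop, List.getElem_take, seg_getElem, seg_getElem]
    refine Fin.ext ?_
    show (c.1 + (t + i)) % n = (a.1 + i) % n
    rw [ha, Nat.mod_add_mod, Nat.add_assoc]

lemma oneside_mp (a b c d : Fin n) (h : OneSide a b c d) :
    a ≠ c ∧ cpos c a ≤ cpos c d ∧ cpos a d < cpos a b := by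
  obtain ⟨P, S, Q, P', Q', p, q, p', q', h1, h2, hhd, cp, cq', cq, cp'⟩ := h
  obtain ⟨hp, hS1⟩ := splitBR a b h1 cp cq
  obtain ⟨hS2, hp'⟩ := splitRB c d h2 cp' cq'
  rw [hp, hp'] at hhd
  simp only [Chd, cycNext] at hhd
  have ha := Sum.inl.inj hhd
  have haval : a.1 = (c.1 + (cpos c d - S.length)) % n := by
    rw [ha]
    show ((c.1 + (cpos c d - S.length - 1)) % n + 1) % n = _
    rw [Nat.mod_add_mod]
    congr 1
    omega
  have htn : cpos c d - S.length < n := by have := cpos_lt c d; omega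
  have hca : cpos c a = cpos c d - S.length := by
    have h3 : a = ⟨(c.1 + (cpos c d - S.length)) % n, Nat.mod_lt _ (npos c)⟩ :=
      Fin.ext haval
    rw [h3]
    exact cpos_val_add c _ htn (npos c)
  have hkn : S.length < n := by have := cpos_lt c d; omega
  have had : cpos a d = S.length := by
    have hd2 : d = ⟨(a.1 + S.length) % n, Nat.mod_lt _ (npos a)⟩ := by
      refine Fin.ext ?_
      show d.1 = (a.1 + S.length) % n
      rw [haval, Nat.mod_add_mod]
      have h4 : c.1 + (cpos c d - S.length) + S.length = c.1 + cpos c d := by omega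
      rw [h4]
      exact (cpos_add c d).symm
    rw [hd2]
    exact cpos_val_add a _ hkn (npos a)
  refine ⟨?_, by omega, by omega⟩
  intro hac
  rw [hac, cpos_self] at hca
  omega

lemma oneside_mpr (a b c d : Fin n) (hac : a ≠ c)
    (h1 : cpos c a ≤ cpos c d) (h2 : cpos a d < cpos a b) :
    OneSide a b c d := by
  have ht1 : 1 ≤ cpos c a := by
    rcases Nat.eq_zero_or_pos (cpos c a) with h | h
    · exact absurd ((cpos_zero_iff c a).mp h) hac
    · omega
  have haval : a.1 = (c.1 + cpos c a) % n := (cpos_add c a).symm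
  have hk : cpos a d = cpos c d - cpos c a := by
    have hd2 : d = ⟨(a.1 + (cpos c d - cpos c a)) % n, Nat.mod_lt _ (npos a)⟩ := by
      refine Fin.ext ?_
      show d.1 = (a.1 + (cpos c d - cpos c a)) % n
      rw [haval, Nat.mod_add_mod]
      have h3 : c.1 + cpos c a + (cpos c d - cpos c a) = c.1 + cpos c d := by omega
      rw [h3]
      exact (cpos_add c d).symm
    have h5 := cpos_val_add a (cpos c d - cpos c a) (by have := cpos_lt c d; omega) (npos a)
    rw [← hd2] at h5
    exact h5
  have hkm : cpos a d < (seg a b).length := by rw [seg_length]; omega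
  have hjm' : cpos c a - 1 < (seg c d).length := by rw [seg_length]; omega
  refine ⟨[], ((seg a b).take (cpos a d)).map Sum.inl,
    ((seg a b).drop (cpos a d + 1)).map Sum.inl ++ [Sum.inr (Sum.inr b)],
    Sum.inr (Sum.inl c) :: ((seg c d).take (cpos c a - 1)).map Sum.inl, [],
    Sum.inr (Sum.inl a), Sum.inl ((seg a b)[cpos a d]'hkm),
    Sum.inl ((seg c d)[cpos c a - 1]'hjm'), Sum.inr (Sum.inr d),
    ?_, ?_, ?_, rfl, rfl, rfl, rfl⟩
  · -- rho a b decomposition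
    rw [rho, List.nil_append]
    congr 1
    rw [list_split_map (seg a b) (cpos a d) hkm]
    simp
  · -- rho c d decomposition
    rw [rho]
    simp only [List.cons_append, List.cons.injEq]
    refine ⟨trivial, ?_⟩
    rw [list_split_map (seg c d) (cpos c a - 1) hjm']
    have hj1 : cpos c a - 1 + 1 = cpos c a := by omega
    rw [hj1]
    have hS : (seg c d).drop (cpos c a) = (seg a b).take (cpos a d) := by
      rw [hk]
      exact seg_shift a c d (cpos c a) ht1 h1 haval (by omega)
    rw [hS]
    simp
  · -- head condition
    rw [seg_getElem]
    simp only [Chd, cycNext]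
    refine congrArg _ (Fin.ext ?_)
    show (a.1 : ℕ) = ((c.1 + (cpos c a - 1)) % n + 1) % n
    rw [Nat.mod_add_mod, haval]
    congr 1
    omega

lemma oneside_iff (a b c d : Fin n) :
    OneSide a b c d ↔ (a ≠ c ∧ cpos c a ≤ cpos c d ∧ cpos a d < cpos a b) :=
  ⟨oneside_mp a b c d, fun ⟨h1, h2, h3⟩ => oneside_mpr a b c d h1 h2 h3⟩

lemma incompat_iff (a b c d : Fin n) :
    Incompat (Ctl n) (Chd n) (Ccol n) (rho a b) (rho c d) ↔
      OneSide a b c d ∨ OneSide c d a b := by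
  constructor
  · rintro ⟨-, -, P, S, Q, P', Q', p, q, p', q', hdisj, hhd, c1, c2, c3, c4⟩
    rcases hdisj with ⟨hw, hw'⟩ | ⟨hw, hw'⟩
    · exact Or.inl ⟨P, S, Q, P', Q', p, q, p', q', hw, hw', hhd, c1, c2, c3, c4⟩
    · exact Or.inr ⟨P, S, Q, P', Q', p, q, p', q', hw, hw', hhd, c1, c2, c3, c4⟩
  · intro h
    refine ⟨rho_srcsnk a b, rho_srcsnk c d, ?_⟩
    rcases h with ⟨P, S, Q, P', Q', p, q, p', q', hw, hw', hhd, c1, c2, c3, c4⟩ |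
      ⟨P, S, Q, P', Q', p, q, p', q', hw, hw', hhd, c1, c2, c3, c4⟩
    · exact ⟨P, S, Q, P', Q', p, q, p', q', Or.inl ⟨hw, hw'⟩, hhd, c1, c2, c3, c4⟩
    · exact ⟨P, S, Q, P', Q', p, q, p', q', Or.inr ⟨hw, hw'⟩, hhd, c1, c2, c3, c4⟩

end OneSide
section Final
variable {n : ℕ}

lemma disj_iff (a b c d : Fin n) :
    (∀ x : Fin n, ¬ (memCyc a b x ∧ memCyc c d x)) ↔
      (cpos a b < cpos a c ∧ cpos c d < cpos c a) := by
  constructor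
  · intro h
    constructor
    · by_contra h'
      exact h c ⟨by unfold memCyc at *; omega,
        by unfold memCyc; rw [cpos_self]; exact Nat.zero_le _⟩
    · by_contra h'
      exact h a ⟨by unfold memCyc; rw [cpos_self]; exact Nat.zero_le _,
        by unfold memCyc at *; omega⟩
  · rintro ⟨h1, h2⟩ x ⟨hx1, hx2⟩
    have ha := a.isLt; have hb := b.isLt; have hc := c.isLt
    have hd := d.isLt; have hx := x.isLt
    unfold memCyc at hx1 hx2
    simp only [cpos_eq] at h1 h2 hx1 hx2
    split_ifs at h1 h2 hx1 hx2 <;> omega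

end Final

/-- in the blossomed `n`-cycle, for `a ≠ b` and `c ≠ d`, the good
routes `ρ_{(a,b)}` and `ρ_{(c,d)}` are compatible iff (i) the cyclic intervals
`[a,b]` and `[c,d]` are disjoint, or (ii) `a ⪯ c ⪯ d ⪯ b` in the cyclic order
starting at `a`, or (iii) `c ⪯ a ⪯ b ⪯ d` in the cyclic order starting at `c`. -/
theorem statement19 (n : ℕ) (hn : 2 ≤ n) (a b c d : Fin n)
    (hab : a ≠ b) (hcd : c ≠ d) :
    ¬ Incompat (Ctl n) (Chd n) (Ccol n) (rho a b) (rho c d) ↔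
      ((∀ x : Fin n, ¬ (memCyc a b x ∧ memCyc c d x)) ∨
       (cpos a c ≤ cpos a d ∧ cpos a d ≤ cpos a b) ∨
       (cpos c a ≤ cpos c b ∧ cpos c b ≤ cpos c d)) := by
  rw [incompat_iff, oneside_iff, oneside_iff, disj_iff]
  have hab' : a.1 ≠ b.1 := fun h => hab (Fin.ext h)
  have hcd' : c.1 ≠ d.1 := fun h => hcd (Fin.ext h)
  have hac : (a ≠ c) ↔ ¬ a.1 = c.1 := by
    constructor
    · intro h h'; exact h (Fin.ext h')
    · intro h h'; exact h (congrArg Fin.val h')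
  have hca : (c ≠ a) ↔ ¬ c.1 = a.1 := by
    constructor
    · intro h h'; exact h (Fin.ext h')
    · intro h h'; exact h (congrArg Fin.val h')
  rw [hac, hca]
  have ha := a.isLt; have hb := b.isLt; have hc := c.isLt; have hd := d.isLt
  rw [cpos_eq a b, cpos_eq a c, cpos_eq a d, cpos_eq c a, cpos_eq c b, cpos_eq c d]
  split_ifs <;> omega

end PaperDKK
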